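/- arXiv:2403.10307 — 9 statements merged into one kernel-verified Lean document; each statement's English description precedes it below -/
import Mathlib

section
/- Let ε > 0 and let P, Q be probability measures on a common measurable space that are (ε,0)-close (in particular P ≪ Q and Q ≪ P). Then the Chernoff information satisfies C(P,Q) ≤ ε; that is, ε-differential privacy implies ε-Chernoff differential privacy. -/
open MeasureTheory Real

/-- If `P` and `Q` are probability measures (with densities `p`, `q` w.r.t. a
common σ-finite measure `μ`) that are `(ε,0)`-close (in particular `P ≪ Q` and `Q ≪ P`) for
`ε > 0`, then the Chernoff information
`C(P,Q) = ⨆ α ∈ (0,1), (- log ∫ p^α q^(1-α) dμ)` satisfies `C(P,Q) ≤ ε`. -/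
theorem chernoff_le_of_eps_close
    {Ω : Type*} [MeasurableSpace Ω] (μ P Q : Measure Ω) [SigmaFinite μ]
    [IsProbabilityMeasure P] [IsProbabilityMeasure Q]
    (p q : Ω → ℝ) (hp : Measurable p) (hq : Measurable q)
    (hp0 : ∀ x, 0 ≤ p x) (hq0 : ∀ x, 0 ≤ q x)
    (hP : P = μ.withDensity (fun x => ENNReal.ofReal (p x)))
    (hQ : Q = μ.withDensity (fun x => ENNReal.ofReal (q x)))
    (ε : ℝ) (hε : 0 < ε)
    (hPQ : P ≪ Q) (hQP : Q ≪ P)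
    (hclose : ∀ A : Set Ω, MeasurableSet A →
      P A ≤ ENNReal.ofReal (Real.exp ε) * Q A ∧ Q A ≤ ENNReal.ofReal (Real.exp ε) * P A) :
    (⨆ α : Set.Ioo (0 : ℝ) 1,
      - Real.log (∫ x, p x ^ (α : ℝ) * q x ^ (1 - (α : ℝ)) ∂μ)) ≤ ε := by
  -- a.e. bound: p ≤ exp ε * q
  have hple : ∀ᵐ x ∂μ, p x ≤ Real.exp ε * q x := by
    have h := ae_le_of_forall_setLIntegral_le_of_sigmaFinite (μ := μ)
      (f := fun x => ENNReal.ofReal (p x)) (g := fun x => ENNReal.ofReal (Real.exp ε * q x))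
      (hp.ennreal_ofReal) ?_
    · filter_upwards [h] with x hx
      exact (ENNReal.ofReal_le_ofReal_iff (mul_nonneg (Real.exp_pos ε).le (hq0 x))).mp hx
    · intro s hs _
      have h1 := (hclose s hs).1
      rw [hP, hQ, withDensity_apply _ hs, withDensity_apply _ hs] at h1
      calc ∫⁻ x in s, ENNReal.ofReal (p x) ∂μ
          ≤ ENNReal.ofReal (Real.exp ε) * ∫⁻ x in s, ENNReal.ofReal (q x) ∂μ := h1
        _ = ∫⁻ x in s, ENNReal.ofReal (Real.exp ε) * ENNReal.ofReal (q x) ∂μ := by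
            rw [lintegral_const_mul _ hq.ennreal_ofReal]
        _ = ∫⁻ x in s, ENNReal.ofReal (Real.exp ε * q x) ∂μ := by
            congr 1; ext x
            rw [ENNReal.ofReal_mul (Real.exp_pos ε).le]
  -- integrals of p and q are 1
  have hlintp : ∫⁻ x, ENNReal.ofReal (p x) ∂μ = 1 := by
    have : P Set.univ = 1 := measure_univ
    rwa [hP, withDensity_apply _ MeasurableSet.univ, setLIntegral_univ] at this
  have hlintq : ∫⁻ x, ENNReal.ofReal (q x) ∂μ = 1 := by
    have : Q Set.univ = 1 := measure_univ
    rwa [hQ, withDensity_apply _ MeasurableSet.univ, setLIntegral_univ] at this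
  have hintp : Integrable p μ := by
    refine ⟨hp.aestronglyMeasurable, ?_⟩
    rw [hasFiniteIntegral_iff_ofReal (ae_of_all _ hp0), hlintp]
    exact ENNReal.one_lt_top
  have hintq : Integrable q μ := by
    refine ⟨hq.aestronglyMeasurable, ?_⟩
    rw [hasFiniteIntegral_iff_ofReal (ae_of_all _ hq0), hlintq]
    exact ENNReal.one_lt_top
  have hip : ∫ x, p x ∂μ = 1 := by
    rw [integral_eq_lintegral_of_nonneg_ae (ae_of_all _ hp0) hp.aestronglyMeasurable, hlintp]
    simp
  -- main bound per α
  haveI : Nonempty (Set.Ioo (0:ℝ) 1) := ⟨⟨1/2, by norm_num⟩⟩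
  refine ciSup_le fun α => ?_
  obtain ⟨α, hα0, hα1⟩ := α
  simp only
  set g : Ω → ℝ := fun x => p x ^ (α : ℝ) * q x ^ (1 - (α : ℝ)) with hg
  have hg0 : ∀ x, 0 ≤ g x := fun x => mul_nonneg (Real.rpow_nonneg (hp0 x) _) (Real.rpow_nonneg (hq0 x) _)
  have hgm : Measurable g := by fun_prop
  -- upper bound for integrability: g ≤ exp(εα) * q
  have hub : ∀ᵐ x ∂μ, g x ≤ Real.exp (ε * α) * q x := by
    filter_upwards [hple] with x hx
    have h1 : p x ^ (α : ℝ) ≤ (Real.exp ε * q x) ^ (α : ℝ) :=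
      Real.rpow_le_rpow (hp0 x) hx hα0.le
    calc g x ≤ (Real.exp ε * q x) ^ (α : ℝ) * q x ^ (1 - (α : ℝ)) := by
          exact mul_le_mul_of_nonneg_right h1 (Real.rpow_nonneg (hq0 x) _)
      _ = Real.exp (ε * α) * (q x ^ (α : ℝ) * q x ^ (1 - (α : ℝ))) := by
          rw [Real.mul_rpow (Real.exp_pos ε).le (hq0 x), ← Real.exp_mul]
          ring
      _ = Real.exp (ε * α) * q x := by
          rw [← Real.rpow_add' (hq0 x) (by norm_num)]
          norm_num
  have hintg : Integrable g μ := by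
    refine Integrable.mono' (hintq.const_mul (Real.exp (ε * α))) hgm.aestronglyMeasurable ?_
    filter_upwards [hub] with x hx
    rwa [Real.norm_of_nonneg (hg0 x)]
  -- lower bound: exp(-ε) * p ≤ g
  have hlb : ∀ᵐ x ∂μ, Real.exp (-ε) * p x ≤ g x := by
    filter_upwards [hple] with x hx
    have hq' : Real.exp (-ε) * p x ≤ q x := by
      rw [Real.exp_neg]
      rw [inv_mul_le_iff₀ (Real.exp_pos ε)] at *
      linarith [hx]
    have h1 : (Real.exp (-ε) * p x) ^ (1 - (α : ℝ)) ≤ q x ^ (1 - (α : ℝ)) :=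
      Real.rpow_le_rpow (mul_nonneg (Real.exp_pos _).le (hp0 x)) hq' (by linarith)
    calc Real.exp (-ε) * p x
        ≤ Real.exp (-ε * (1 - α)) * p x := by
          apply mul_le_mul_of_nonneg_right _ (hp0 x)
          apply Real.exp_le_exp.mpr
          nlinarith
      _ = (Real.exp (-ε)) ^ (1 - (α : ℝ)) * (p x ^ (α : ℝ) * p x ^ (1 - (α : ℝ))) := by
          rw [← Real.exp_mul, ← Real.rpow_add' (hp0 x) (by norm_num)]
          norm_num
      _ = p x ^ (α : ℝ) * (Real.exp (-ε) * p x) ^ (1 - (α : ℝ)) := by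
          rw [Real.mul_rpow (Real.exp_pos _).le (hp0 x)]; ring
      _ ≤ g x := mul_le_mul_of_nonneg_left h1 (Real.rpow_nonneg (hp0 x) _)
  have hIlb : Real.exp (-ε) ≤ ∫ x, g x ∂μ := by
    have := integral_mono_ae (hintp.const_mul (Real.exp (-ε))) hintg hlb
    rwa [integral_const_mul, hip, mul_one] at this
  have hIpos : 0 < ∫ x, g x ∂μ := lt_of_lt_of_le (Real.exp_pos _) hIlb
  have := Real.log_le_log (Real.exp_pos (-ε)) hIlb
  rw [Real.log_exp] at this
  linarith
end

section
/- Let ε > 0 and let P, Q be probability measures on a common measurable space with P ≪ Q that are (ε,0)-close. Then the Kullback–Leibler divergence satisfies D(P‖Q) ≤ ε · (e^ε − 1)(1 − e^{−ε}) / (e^ε − e^{−ε}). -/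
/-!
Closeness pins the density `r = dP/dQ` between `e^{-ε}` and `e^ε`, `Q`-a.e. and hence `P`-a.e.
By concavity, `-log` of `1/r ∈ [e^{-ε}, e^ε]` lies below its chord, so `log r` is bounded by an
affine function of `1/r`; and `1/r = dQ/dP` has `P`-mean `1`. Integrating gives
`D(P‖Q) ≤ ε (e^ε + e^{-ε} - 2) / (e^ε - e^{-ε})`, which is the claim since `e^ε e^{-ε} = 1`.
-/

open MeasureTheory Real

open scoped ENNReal

theorem Real.chord_le_log {a b u : ℝ} (ha : 0 < a) (hau : a ≤ u) (hub : u ≤ b) :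
    (b - u) * log a + (u - a) * log b ≤ (b - a) * log u := by
  rcases hau.eq_or_lt with rfl | hau'
  · simp
  have hab : 0 < b - a := by linarith
  have key := strictConcaveOn_log_Ioi.concaveOn.2 (Set.mem_Ioi.2 ha)
    (Set.mem_Ioi.2 (ha.trans_le (hau.trans hub))) (div_nonneg (sub_nonneg.2 hub) hab.le)
    (div_nonneg (sub_nonneg.2 hau) hab.le) (by field_simp; ring)
  have hu : ((b - u) / (b - a)) • a + ((u - a) / (b - a)) • b = u := by
    simp only [smul_eq_mul]; field_simp; ring
  rw [hu, smul_eq_mul, smul_eq_mul] at key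
  calc (b - u) * log a + (u - a) * log b
      = (b - a) * ((b - u) / (b - a) * log a + (u - a) / (b - a) * log b) := by
        field_simp
    _ ≤ (b - a) * log u := mul_le_mul_of_nonneg_left key hab.le

namespace MeasureTheory.Measure

variable {α : Type*} [MeasurableSpace α] {μ ν : Measure α}

lemma ae_rnDeriv_le_of_forall_le_mul [SigmaFinite ν] {c : ℝ≥0∞}
    (h : ∀ s, MeasurableSet s → μ s ≤ c * ν s) : ∀ᵐ x ∂ν, μ.rnDeriv ν x ≤ c :=
  ae_le_of_forall_setLIntegral_le_of_sigmaFinite (μ.measurable_rnDeriv ν) fun s hs _ ↦ by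
    rw [setLIntegral_const]
    exact (setLIntegral_rnDeriv_le s).trans (h s hs)

lemma ae_le_rnDeriv_of_forall_mul_le [HaveLebesgueDecomposition μ ν] [SigmaFinite ν]
    {c : ℝ≥0∞} (hμν : μ ≪ ν) (h : ∀ s, MeasurableSet s → c * ν s ≤ μ s) :
    ∀ᵐ x ∂ν, c ≤ μ.rnDeriv ν x :=
  ae_le_of_forall_setLIntegral_le_of_sigmaFinite measurable_const fun s hs _ ↦ by
    rw [setLIntegral_const, setLIntegral_rnDeriv hμν s]
    exact h s hs

lemma ae_rnDeriv_toReal_mem_Icc [SigmaFinite μ] [SigmaFinite ν] {c : ℝ} (hc : 0 < c)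
    (hμν : μ ≪ ν)
    (h : ∀ s, MeasurableSet s → μ s ≤ ENNReal.ofReal c * ν s ∧ ν s ≤ ENNReal.ofReal c * μ s) :
    ∀ᵐ x ∂ν, (μ.rnDeriv ν x).toReal ∈ Set.Icc c⁻¹ c := by
  have hupper := ae_rnDeriv_le_of_forall_le_mul fun s hs ↦ (h s hs).1
  have hlower : ∀ᵐ x ∂ν, ENNReal.ofReal c⁻¹ ≤ μ.rnDeriv ν x :=
    ae_le_rnDeriv_of_forall_mul_le hμν fun s hs ↦ calc
      ENNReal.ofReal c⁻¹ * ν s ≤ ENNReal.ofReal c⁻¹ * (ENNReal.ofReal c * μ s) := by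
        gcongr; exact (h s hs).2
      _ = μ s := by
        rw [← mul_assoc, ← ENNReal.ofReal_mul (by positivity), inv_mul_cancel₀ hc.ne',
          ENNReal.ofReal_one, one_mul]
  filter_upwards [hupper, hlower] with x hu hl
  have hne : μ.rnDeriv ν x ≠ ∞ := ne_top_of_le_ne_top ENNReal.ofReal_ne_top hu
  exact ⟨(ENNReal.ofReal_le_iff_le_toReal hne).1 hl, ENNReal.toReal_le_of_le_ofReal hc.le hu⟩

lemma integral_inv_toReal_rnDeriv [SigmaFinite μ] [SigmaFinite ν] (hμν : μ ≪ ν) (hνμ : ν ≪ μ) :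
    ∫ x, (μ.rnDeriv ν x).toReal⁻¹ ∂μ = ν.real Set.univ := by
  calc ∫ x, (μ.rnDeriv ν x).toReal⁻¹ ∂μ = ∫ x, (ν.rnDeriv μ x).toReal ∂μ := by
        refine integral_congr_ae ?_
        filter_upwards [inv_rnDeriv hμν] with x hx
        rw [← hx, Pi.inv_apply, ENNReal.toReal_inv]
    _ = ν.real Set.univ := integral_toReal_rnDeriv hνμ

theorem integral_log_toReal_rnDeriv_le [IsProbabilityMeasure μ] [IsProbabilityMeasure ν]
    (hμν : μ ≪ ν) (hνμ : ν ≪ μ) {a b : ℝ} (ha : 0 < a)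
    (h : ∀ᵐ x ∂μ, (μ.rnDeriv ν x).toReal ∈ Set.Icc a b) :
    (a⁻¹ - b⁻¹) * ∫ x, log (μ.rnDeriv ν x).toReal ∂μ
      ≤ (a⁻¹ - 1) * log b + (1 - b⁻¹) * log a := by
  set r := fun x ↦ (μ.rnDeriv ν x).toReal
  have hr : Measurable r := (μ.measurable_rnDeriv ν).ennreal_toReal
  have hlog_int : Integrable (fun x ↦ log (r x)) μ := by
    refine .of_mem_Icc (log a) (log b) (measurable_log.comp hr).aemeasurable ?_
    filter_upwards [h] with x hx
    exact ⟨log_le_log ha hx.1, log_le_log (ha.trans_le hx.1) hx.2⟩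
  have hinv_int : Integrable (fun x ↦ (r x)⁻¹) μ := by
    refine .of_mem_Icc b⁻¹ a⁻¹ hr.inv.aemeasurable ?_
    filter_upwards [h] with x hx
    exact ⟨inv_anti₀ (ha.trans_le hx.1) hx.2, inv_anti₀ ha hx.1⟩
  have hchord : ∀ᵐ x ∂μ, (a⁻¹ - b⁻¹) * log (r x)
      ≤ (a⁻¹ * log b - b⁻¹ * log a) + (log a - log b) * (r x)⁻¹ := by
    filter_upwards [h] with x hx
    have hrx : 0 < r x := ha.trans_le hx.1
    have := chord_le_log (inv_pos.2 (ha.trans_le (hx.1.trans hx.2)))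
      (inv_anti₀ hrx hx.2) (inv_anti₀ ha hx.1)
    simp only [log_inv] at this
    linarith
  calc (a⁻¹ - b⁻¹) * ∫ x, log (r x) ∂μ = ∫ x, (a⁻¹ - b⁻¹) * log (r x) ∂μ :=
        (integral_const_mul _ _).symm
    _ ≤ ∫ x, (a⁻¹ * log b - b⁻¹ * log a) + (log a - log b) * (r x)⁻¹ ∂μ :=
        integral_mono_ae (hlog_int.const_mul _)
          ((integrable_const _).add (hinv_int.const_mul _)) hchord
    _ = (a⁻¹ - 1) * log b + (1 - b⁻¹) * log a := by
        rw [integral_add (integrable_const _) (hinv_int.const_mul _), integral_const,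
          integral_const_mul, integral_inv_toReal_rnDeriv hμν hνμ]
        simp only [probReal_univ, smul_eq_mul, one_mul]
        ring

end MeasureTheory.Measure

/-- If `P ≪ Q` are probability measures that are `(ε,0)`-close for `ε > 0`, then
the Kullback–Leibler divergence `D(P‖Q) = ∫ log (dP/dQ) dP` satisfies
`D(P‖Q) ≤ ε (e^ε - 1)(1 - e^{-ε}) / (e^ε - e^{-ε})`. -/
theorem kl_le_of_eps_close
    {Ω : Type*} [MeasurableSpace Ω] (P Q : Measure Ω)
    [IsProbabilityMeasure P] [IsProbabilityMeasure Q]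
    (ε : ℝ) (hε : 0 < ε) (hPQ : P ≪ Q)
    (hclose : ∀ A : Set Ω, MeasurableSet A →
      P A ≤ ENNReal.ofReal (Real.exp ε) * Q A ∧ Q A ≤ ENNReal.ofReal (Real.exp ε) * P A) :
    ∫ x, Real.log ((P.rnDeriv Q x).toReal) ∂P
      ≤ ε * ((Real.exp ε - 1) * (1 - Real.exp (-ε))) / (Real.exp ε - Real.exp (-ε)) := by
  have hQP : Q ≪ P := Measure.absolutelyContinuous_of_le_smul <|
    Measure.le_iff.2 fun A hA ↦ by simpa using (hclose A hA).2
  have hbounds := hPQ.ae_le (Measure.ae_rnDeriv_toReal_mem_Icc (exp_pos ε) hPQ hclose)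
  have hkl := Measure.integral_log_toReal_rnDeriv_le hPQ hQP (inv_pos.2 (exp_pos ε)) hbounds
  rw [inv_inv, ← exp_neg, log_exp, log_exp] at hkl
  have hexp : exp ε * exp (-ε) = 1 := by rw [← exp_add, add_neg_cancel, exp_zero]
  rw [le_div_iff₀ (by linarith [exp_lt_exp.2 (neg_lt_self hε)])]
  linear_combination hkl + ε * hexp
end

section
/- Let ε > 0 and let Z be a real-valued random variable on a probability space such that e^{−ε} ≤ Z ≤ e^{ε} almost surely and E[Z] = 1. Then E[Z log Z] ≤ ε · (e^ε − 1)(1 − e^{−ε}) / (e^ε − e^{−ε}); the bound is attained by the two-point variable taking the value e^{ε} with probability p = (1 − e^{−ε})/(e^ε − e^{−ε}) and e^{−ε} with probability 1 − p. -/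
open MeasureTheory Real

/-! `x ↦ x log x` is convex, so on `[e^{-ε}, e^ε]` it lies below its chord. Integrating the chord,
an affine function, only sees `E[Z] = 1`, and its value there is the expectation of `Z log Z`
for the two-point variable with mean `1` supported on the endpoints. -/

theorem ConvexOn.le_chord {s : Set ℝ} {f : ℝ → ℝ} (hf : ConvexOn ℝ s f) {a b z : ℝ}
    (ha : a ∈ s) (hb : b ∈ s) (haz : a ≤ z) (hzb : z ≤ b) :
    f z ≤ f a + (z - a) * ((f b - f a) / (b - a)) := by
  rcases haz.eq_or_lt with rfl | haz
  · simp
  have hz : z ∈ s := hf.1.ordConnected.out ha hb ⟨haz.le, hzb⟩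
  have hslope := hf.secant_mono ha hz hb haz.ne' (haz.trans_le hzb).ne' hzb
  rw [div_le_iff₀ (sub_pos.2 haz)] at hslope
  linarith

theorem ConvexOn.integral_comp_le_chord {Ω : Type*} [MeasurableSpace Ω] {μ : Measure Ω}
    [IsProbabilityMeasure μ] {s : Set ℝ} {f : ℝ → ℝ} (hf : ConvexOn ℝ s f) {a b : ℝ}
    (ha : a ∈ s) (hb : b ∈ s) {Z : Ω → ℝ} (hZ : Integrable Z μ)
    (hfZ : Integrable (fun ω ↦ f (Z ω)) μ) (hrange : ∀ᵐ ω ∂μ, a ≤ Z ω ∧ Z ω ≤ b) :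
    ∫ ω, f (Z ω) ∂μ ≤ f a + (∫ ω, Z ω ∂μ - a) * ((f b - f a) / (b - a)) := by
  have hZa : Integrable (fun ω ↦ Z ω - a) μ := hZ.sub (integrable_const a)
  calc ∫ ω, f (Z ω) ∂μ ≤ ∫ ω, f a + (Z ω - a) * ((f b - f a) / (b - a)) ∂μ :=
        integral_mono_ae hfZ ((integrable_const _).add (hZa.mul_const _)) <| by
          filter_upwards [hrange] with ω ⟨haZ, hZb⟩
          exact hf.le_chord ha hb haZ hZb
    _ = f a + (∫ ω, Z ω ∂μ - a) * ((f b - f a) / (b - a)) := by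
        rw [integral_add (integrable_const _) (hZa.mul_const _),
          integral_mul_const, integral_sub hZ (integrable_const a)]
        simp

theorem Continuous.integrable_comp_of_ae_mem_Icc {Ω : Type*} [MeasurableSpace Ω]
    {μ : Measure Ω} [IsFiniteMeasure μ] {g : ℝ → ℝ} (hg : Continuous g) {a b : ℝ}
    {Z : Ω → ℝ} (hZ : AEMeasurable Z μ) (hrange : ∀ᵐ ω ∂μ, a ≤ Z ω ∧ Z ω ≤ b) :
    Integrable (fun ω ↦ g (Z ω)) μ := by
  obtain ⟨C, hC⟩ := (isCompact_Icc (a := a) (b := b)).exists_bound_of_continuousOn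
    hg.continuousOn
  refine Integrable.of_mem_Icc (-C) C (hg.measurable.comp_aemeasurable hZ) ?_
  filter_upwards [hrange] with ω hω
  exact abs_le.1 (hC _ hω)

theorem two_point_exp_mul_log_eq (ε : ℝ) :
    (1 - exp (-ε)) / (exp ε - exp (-ε)) * (exp ε * log (exp ε))
        + (1 - (1 - exp (-ε)) / (exp ε - exp (-ε))) * (exp (-ε) * log (exp (-ε)))
      = ε * ((exp ε - 1) * (1 - exp (-ε))) / (exp ε - exp (-ε)) := by
  rcases eq_or_ne ε 0 with rfl | hε
  · simp
  have hne : exp ε - exp (-ε) ≠ 0 :=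
    sub_ne_zero.2 fun h ↦ hε (by linarith [exp_injective h])
  have hinv : exp ε * exp (-ε) = 1 := by rw [← exp_add, add_neg_cancel, exp_zero]
  rw [log_exp, log_exp]
  field_simp
  linear_combination -hinv

theorem z_log_z_bound_general
    {Ω : Type*} [MeasurableSpace Ω] (μ : Measure Ω) [IsProbabilityMeasure μ]
    (ε : ℝ) (Z : Ω → ℝ)
    (hrange : ∀ᵐ x ∂μ, Real.exp (-ε) ≤ Z x ∧ Z x ≤ Real.exp ε)
    (hmean : ∫ x, Z x ∂μ = 1) :
    (∫ x, Z x * Real.log (Z x) ∂μ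
        ≤ ε * ((Real.exp ε - 1) * (1 - Real.exp (-ε))) / (Real.exp ε - Real.exp (-ε)))
    ∧ ((1 - Real.exp (-ε)) / (Real.exp ε - Real.exp (-ε))
            * (Real.exp ε * Real.log (Real.exp ε))
        + (1 - (1 - Real.exp (-ε)) / (Real.exp ε - Real.exp (-ε)))
            * (Real.exp (-ε) * Real.log (Real.exp (-ε)))
        = ε * ((Real.exp ε - 1) * (1 - Real.exp (-ε))) / (Real.exp ε - Real.exp (-ε))) := by
  refine ⟨?_, two_point_exp_mul_log_eq ε⟩
  -- the Bochner integral of a non-integrable function is `0`, not `1`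
  have hZ : Integrable Z μ := .of_integral_ne_zero (by simp [hmean])
  have hZlogZ : Integrable (fun x ↦ Z x * log (Z x)) μ :=
    continuous_mul_log.integrable_comp_of_ae_mem_Icc hZ.aemeasurable hrange
  have hchord := convexOn_mul_log.integral_comp_le_chord (exp_pos (-ε)).le (exp_pos ε).le
    hZ hZlogZ hrange
  rw [hmean] at hchord
  exact hchord.trans_eq <| by rw [← two_point_exp_mul_log_eq]; ring

/-- If `Z` is a real random variable on a probability space with
`e^{-ε} ≤ Z ≤ e^ε` a.s. and `E[Z] = 1` (for `ε > 0`), then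
`E[Z log Z] ≤ ε (e^ε - 1)(1 - e^{-ε}) / (e^ε - e^{-ε})`, and the bound is attained by the
two-point variable taking the value `e^ε` with probability `p = (1 - e^{-ε})/(e^ε - e^{-ε})`
and `e^{-ε}` with probability `1 - p`. -/
theorem z_log_z_bound
    {Ω : Type*} [MeasurableSpace Ω] (μ : Measure Ω) [IsProbabilityMeasure μ]
    (ε : ℝ) (hε : 0 < ε) (Z : Ω → ℝ) (hZ : Measurable Z)
    (hrange : ∀ᵐ x ∂μ, Real.exp (-ε) ≤ Z x ∧ Z x ≤ Real.exp ε)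
    (hmean : ∫ x, Z x ∂μ = 1) :
    (∫ x, Z x * Real.log (Z x) ∂μ
        ≤ ε * ((Real.exp ε - 1) * (1 - Real.exp (-ε))) / (Real.exp ε - Real.exp (-ε)))
    ∧ ((1 - Real.exp (-ε)) / (Real.exp ε - Real.exp (-ε))
            * (Real.exp ε * Real.log (Real.exp ε))
        + (1 - (1 - Real.exp (-ε)) / (Real.exp ε - Real.exp (-ε)))
            * (Real.exp (-ε) * Real.log (Real.exp (-ε)))
        = ε * ((Real.exp ε - 1) * (1 - Real.exp (-ε))) / (Real.exp ε - Real.exp (-ε))) :=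
  z_log_z_bound_general μ ε Z hrange hmean
end

section
/- Let m ∈ ℕ and for each j = 1,…,m let P_j and Q_j be probability measures with densities p_j and q_j with respect to σ-finite dominating measures μ_j on (Ω_j, F_j), and suppose the Chernoff information satisfies C(P_j, Q_j) ≤ ε_j for some ε_j ≥ 0. Then the product measures satisfy C(P_1 ⊗ ⋯ ⊗ P_m, Q_1 ⊗ ⋯ ⊗ Q_m) ≤ ε_1 + ⋯ + ε_m; that is, ε_j-Chernoff differential privacy composes sequentially with total privacy budget Σ_j ε_j. -/
/-!
The skewed Bhattacharyya coefficient is multiplicative over products: by Fubini,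
`C_α(⊗ P_j, ⊗ Q_j) = ∏ C_α(P_j, Q_j)`, so `-log C_α` of the product is the sum of the
`-log C_α(P_j, Q_j) ≤ C(P_j, Q_j) ≤ ε_j`, and taking the supremum over `α` gives the bound.
The only analytic input is that each `α ↦ -log C_α(P_j, Q_j)` is bounded above, by
`-log ∫ min (p_j, q_j)`, since `min p q ≤ p ^ α q ^ (1 - α)`.
-/

open MeasureTheory Real Set

namespace Real

lemma min_le_rpow_mul_rpow {x y a : ℝ} (hx : 0 ≤ x) (hy : 0 ≤ y) (ha0 : 0 ≤ a) (ha1 : a ≤ 1) :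
    min x y ≤ x ^ a * y ^ (1 - a) := by
  have hm : 0 ≤ min x y := le_min hx hy
  calc min x y = min x y ^ a * min x y ^ (1 - a) := by
        rw [← rpow_add' hm (by norm_num), add_sub_cancel, rpow_one]
    _ ≤ x ^ a * y ^ (1 - a) :=
        mul_le_mul (rpow_le_rpow hm (min_le_left x y) ha0)
          (rpow_le_rpow hm (min_le_right x y) (sub_nonneg.2 ha1)) (rpow_nonneg hm _)
          (rpow_nonneg hx _)

lemma rpow_mul_rpow_eq_zero_of_min_eq_zero {x y a : ℝ} (ha : a ∈ Ioo 0 1) (h : min x y = 0) :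
    x ^ a * y ^ (1 - a) = 0 := by
  rcases min_eq_iff.1 h with ⟨rfl, -⟩ | ⟨rfl, -⟩
  · rw [zero_rpow ha.1.ne', zero_mul]
  · rw [zero_rpow (sub_pos.2 ha.2).ne', mul_zero]

lemma neg_log_prod_le_sum {ι : Type*} (s : Finset ι) {c ε : ι → ℝ}
    (hc : ∀ i ∈ s, -log (c i) ≤ ε i) (hε : ∀ i ∈ s, 0 ≤ ε i) :
    -log (∏ i ∈ s, c i) ≤ ∑ i ∈ s, ε i := by
  by_cases hz : ∃ i ∈ s, c i = 0
  · obtain ⟨i, hi, hci⟩ := hz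
    rw [Finset.prod_eq_zero hi hci, log_zero, neg_zero]
    exact Finset.sum_nonneg hε
  · rw [log_prod fun i hi hci => hz ⟨i, hi, hci⟩, ← Finset.sum_neg_distrib]
    exact Finset.sum_le_sum hc

end Real

lemma MeasureTheory.integrable_of_isFiniteMeasure_withDensity_ofReal {Ω : Type*}
    [MeasurableSpace Ω] {μ : Measure Ω} {f : Ω → ℝ} (hf : AEStronglyMeasurable f μ)
    (hf0 : 0 ≤ᵐ[μ] f) [IsFiniteMeasure (μ.withDensity fun x => ENNReal.ofReal (f x))] :
    Integrable f μ := by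
  refine ⟨hf, ?_⟩
  rw [hasFiniteIntegral_iff_ofReal hf0, ← setLIntegral_univ, ← withDensity_apply _ .univ]
  exact measure_lt_top _ _

section Chernoff

variable {Ω : Type*} [MeasurableSpace Ω]

noncomputable def skewBhattacharyya (μ : Measure Ω) (p q : Ω → ℝ) (α : ℝ) : ℝ :=
  ∫ x, p x ^ α * q x ^ (1 - α) ∂μ

/-- A real `⨆` of a family that is not bounded above is `0`; boundedness is
`bddAbove_neg_log_skewBhattacharyya`. -/
noncomputable def chernoffInformation (μ : Measure Ω) (p q : Ω → ℝ) : ℝ :=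
  ⨆ α : Ioo (0 : ℝ) 1, -log (skewBhattacharyya μ p q α)

variable {μ : Measure Ω} {p q : Ω → ℝ}

lemma integrable_rpow_mul_rpow (hp : Measurable p) (hq : Measurable q)
    (hp0 : ∀ x, 0 ≤ p x) (hq0 : ∀ x, 0 ≤ q x) (hpi : Integrable p μ) (hqi : Integrable q μ)
    {a : ℝ} (ha0 : 0 ≤ a) (ha1 : a ≤ 1) :
    Integrable (fun x => p x ^ a * q x ^ (1 - a)) μ := by
  refine ((hpi.const_mul a).add (hqi.const_mul (1 - a))).mono
    (by fun_prop : Measurable fun x => p x ^ a * q x ^ (1 - a)).aestronglyMeasurable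
    (ae_of_all _ fun x => ?_)
  have hb : 0 ≤ 1 - a := sub_nonneg.2 ha1
  rw [Pi.add_apply, norm_of_nonneg (mul_nonneg (rpow_nonneg (hp0 x) a) (rpow_nonneg (hq0 x) _)),
    norm_of_nonneg (add_nonneg (mul_nonneg ha0 (hp0 x)) (mul_nonneg hb (hq0 x)))]
  exact geom_mean_le_arith_mean2_weighted ha0 hb (hp0 x) (hq0 x) (add_sub_cancel a 1)

lemma integral_min_le_skewBhattacharyya (hp : Measurable p) (hq : Measurable q)
    (hp0 : ∀ x, 0 ≤ p x) (hq0 : ∀ x, 0 ≤ q x) (hpi : Integrable p μ) (hqi : Integrable q μ)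
    {a : ℝ} (ha0 : 0 ≤ a) (ha1 : a ≤ 1) :
    ∫ x, min (p x) (q x) ∂μ ≤ skewBhattacharyya μ p q a :=
  integral_mono (hpi.inf hqi) (integrable_rpow_mul_rpow hp hq hp0 hq0 hpi hqi ha0 ha1)
    fun x => min_le_rpow_mul_rpow (hp0 x) (hq0 x) ha0 ha1

lemma skewBhattacharyya_eq_zero_of_integral_min_eq_zero (hp0 : ∀ x, 0 ≤ p x)
    (hq0 : ∀ x, 0 ≤ q x) (hpi : Integrable p μ) (hqi : Integrable q μ) {a : ℝ}
    (ha : a ∈ Ioo 0 1) (h : ∫ x, min (p x) (q x) ∂μ = 0) :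
    skewBhattacharyya μ p q a = 0 := by
  have hm0 : 0 ≤ fun x => min (p x) (q x) := fun x => le_min (hp0 x) (hq0 x)
  have hmin : (fun x => min (p x) (q x)) =ᵐ[μ] 0 :=
    (integral_eq_zero_iff_of_nonneg hm0 (hpi.inf hqi)).1 h
  rw [skewBhattacharyya, integral_eq_zero_of_ae]
  filter_upwards [hmin] with x hx using rpow_mul_rpow_eq_zero_of_min_eq_zero ha hx

lemma neg_log_skewBhattacharyya_le (hp : Measurable p) (hq : Measurable q)
    (hp0 : ∀ x, 0 ≤ p x) (hq0 : ∀ x, 0 ≤ q x) (hpi : Integrable p μ) (hqi : Integrable q μ)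
    {a : ℝ} (ha : a ∈ Ioo 0 1) :
    -log (skewBhattacharyya μ p q a) ≤ -log (∫ x, min (p x) (q x) ∂μ) := by
  have hm0 : 0 ≤ fun x => min (p x) (q x) := fun x => le_min (hp0 x) (hq0 x)
  rcases (integral_nonneg (μ := μ) hm0).lt_or_eq with hpos | hzero
  · exact neg_le_neg <| log_le_log hpos <|
      integral_min_le_skewBhattacharyya hp hq hp0 hq0 hpi hqi ha.1.le ha.2.le
  · rw [skewBhattacharyya_eq_zero_of_integral_min_eq_zero hp0 hq0 hpi hqi ha hzero.symm, ← hzero]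

lemma bddAbove_neg_log_skewBhattacharyya (hp : Measurable p) (hq : Measurable q)
    (hp0 : ∀ x, 0 ≤ p x) (hq0 : ∀ x, 0 ≤ q x) (hpi : Integrable p μ) (hqi : Integrable q μ) :
    BddAbove (range fun α : Ioo (0 : ℝ) 1 => -log (skewBhattacharyya μ p q α)) :=
  ⟨_, forall_mem_range.2 fun α => neg_log_skewBhattacharyya_le hp hq hp0 hq0 hpi hqi α.2⟩

lemma neg_log_skewBhattacharyya_le_chernoffInformation (hp : Measurable p) (hq : Measurable q)
    (hp0 : ∀ x, 0 ≤ p x) (hq0 : ∀ x, 0 ≤ q x) (hpi : Integrable p μ) (hqi : Integrable q μ)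
    {a : ℝ} (ha : a ∈ Ioo 0 1) :
    -log (skewBhattacharyya μ p q a) ≤ chernoffInformation μ p q :=
  le_ciSup (f := fun α : Ioo (0 : ℝ) 1 => -log (skewBhattacharyya μ p q α))
    (bddAbove_neg_log_skewBhattacharyya hp hq hp0 hq0 hpi hqi) ⟨a, ha⟩

end Chernoff

section Product

variable {ι : Type*} [Fintype ι] {Ω : ι → Type*} [∀ i, MeasurableSpace (Ω i)]
  (μ : ∀ i, Measure (Ω i)) [∀ i, SigmaFinite (μ i)] {p q : ∀ i, Ω i → ℝ}

lemma skewBhattacharyya_pi (hp0 : ∀ i x, 0 ≤ p i x) (hq0 : ∀ i x, 0 ≤ q i x) (a : ℝ) :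
    skewBhattacharyya (Measure.pi μ) (fun x => ∏ i, p i (x i)) (fun x => ∏ i, q i (x i)) a =
      ∏ i, skewBhattacharyya (μ i) (p i) (q i) a := by
  calc _ = ∫ x, ∏ i, p i (x i) ^ a * q i (x i) ^ (1 - a) ∂Measure.pi μ := by
        refine integral_congr_ae (ae_of_all _ fun x => ?_)
        beta_reduce
        rw [Finset.prod_mul_distrib, finsetProd_rpow _ _ (fun i _ => hp0 i (x i)),
          finsetProd_rpow _ _ (fun i _ => hq0 i (x i))]
    _ = _ := integral_fintype_prod_eq_prod fun i y => p i y ^ a * q i y ^ (1 - a)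

theorem chernoffInformation_pi_le_sum (hp : ∀ i, Measurable (p i)) (hq : ∀ i, Measurable (q i))
    (hp0 : ∀ i x, 0 ≤ p i x) (hq0 : ∀ i x, 0 ≤ q i x)
    (hpi : ∀ i, Integrable (p i) (μ i)) (hqi : ∀ i, Integrable (q i) (μ i))
    {ε : ι → ℝ} (hε : ∀ i, 0 ≤ ε i) (hC : ∀ i, chernoffInformation (μ i) (p i) (q i) ≤ ε i) :
    chernoffInformation (Measure.pi μ) (fun x => ∏ i, p i (x i)) (fun x => ∏ i, q i (x i)) ≤
      ∑ i, ε i := by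
  have : Nonempty (Ioo (0 : ℝ) 1) := nonempty_Ioo_subtype one_pos
  refine ciSup_le fun a => ?_
  rw [skewBhattacharyya_pi μ hp0 hq0]
  exact neg_log_prod_le_sum _ (fun i _ => (neg_log_skewBhattacharyya_le_chernoffInformation
    (hp i) (hq i) (hp0 i) (hq0 i) (hpi i) (hqi i) a.2).trans (hC i)) fun i _ => hε i

end Product

/-- if `P j`, `Q j` are probability measures with densities `p j`, `q j` w.r.t.
σ-finite measures `μ j`, and the Chernoff information
`C(P j, Q j) = ⨆ α ∈ (0,1), (- log ∫ (p j)^α (q j)^(1-α) dμ j)` satisfies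
`C(P j, Q j) ≤ ε j` with `ε j ≥ 0`, then the product measures (whose densities w.r.t.
`⊗ⱼ μ j` are `∏ⱼ p j` and `∏ⱼ q j`) satisfy `C(⊗ⱼ P j, ⊗ⱼ Q j) ≤ ∑ⱼ ε j`:
ε-Chernoff differential privacy composes sequentially. -/
theorem chernoffDP_composition {m : ℕ} {Ω : Fin m → Type*} [∀ j, MeasurableSpace (Ω j)]
    (μ : ∀ j, Measure (Ω j)) [∀ j, SigmaFinite (μ j)]
    (P Q : ∀ j, Measure (Ω j)) [∀ j, IsProbabilityMeasure (P j)]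
    [∀ j, IsProbabilityMeasure (Q j)]
    (p q : ∀ j, Ω j → ℝ)
    (hp : ∀ j, Measurable (p j)) (hq : ∀ j, Measurable (q j))
    (hp0 : ∀ j x, 0 ≤ p j x) (hq0 : ∀ j x, 0 ≤ q j x)
    (hP : ∀ j, P j = (μ j).withDensity (fun x => ENNReal.ofReal (p j x)))
    (hQ : ∀ j, Q j = (μ j).withDensity (fun x => ENNReal.ofReal (q j x)))
    (ε : Fin m → ℝ) (hε : ∀ j, 0 ≤ ε j)
    (hC : ∀ j, (⨆ α : Set.Ioo (0 : ℝ) 1,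
        - Real.log (∫ x, p j x ^ (α : ℝ) * q j x ^ (1 - (α : ℝ)) ∂(μ j))) ≤ ε j) :
    (⨆ α : Set.Ioo (0 : ℝ) 1,
        - Real.log (∫ x, (∏ j, p j (x j)) ^ (α : ℝ) * (∏ j, q j (x j)) ^ (1 - (α : ℝ))
          ∂(Measure.pi μ))) ≤ ∑ j, ε j := by
  have hpi j : Integrable (p j) (μ j) :=
    have : IsFiniteMeasure ((μ j).withDensity fun x => ENNReal.ofReal (p j x)) :=
      hP j ▸ inferInstance
    integrable_of_isFiniteMeasure_withDensity_ofReal (hp j).aestronglyMeasurable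
      (ae_of_all _ (hp0 j))
  have hqi j : Integrable (q j) (μ j) :=
    have : IsFiniteMeasure ((μ j).withDensity fun x => ENNReal.ofReal (q j x)) :=
      hQ j ▸ inferInstance
    integrable_of_isFiniteMeasure_withDensity_ofReal (hq j).aestronglyMeasurable
      (ae_of_all _ (hq0 j))
  exact chernoffInformation_pi_le_sum μ hp hq hp0 hq0 hpi hqi hε hC
end

section
/- Let m ∈ ℕ and for each j = 1,…,m let P_j and Q_j be probability measures on a measurable space (Ω_j, F_j) and ε_j ≥ 0 such that P_j(A) ≤ e^{ε_j} · Q_j(A) for every measurable set A ⊆ Ω_j. Then the product measures satisfy (P_1 ⊗ ⋯ ⊗ P_m)(S) ≤ e^{ε_1 + ⋯ + ε_m} · (Q_1 ⊗ ⋯ ⊗ Q_m)(S) for every measurable set S in the product space; that is, a collection of m independently run ε_j-differentially private mechanisms on the same input data satisfies (Σ_j ε_j)-differential privacy. -/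
open MeasureTheory Real

/-- if `P j`, `Q j` are probability measures with
`P j A ≤ e^(ε j) * Q j A` for every measurable set `A` (the `ε j`-differential-privacy
constraint), `ε j ≥ 0`, then the product measures satisfy
`(⊗ⱼ P j) S ≤ e^(∑ⱼ ε j) * (⊗ⱼ Q j) S` for every measurable `S`: a collection of `m`
independently run `ε j`-DP mechanisms on the same data is `(∑ⱼ ε j)`-DP. -/
theorem dp_composition {m : ℕ} {Ω : Fin m → Type*} [∀ j, MeasurableSpace (Ω j)]
    (P Q : ∀ j, Measure (Ω j)) [∀ j, IsProbabilityMeasure (P j)]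
    [∀ j, IsProbabilityMeasure (Q j)]
    (ε : Fin m → ℝ) (hε : ∀ j, 0 ≤ ε j)
    (hdp : ∀ j, ∀ A : Set (Ω j), MeasurableSet A →
      P j A ≤ ENNReal.ofReal (Real.exp (ε j)) * Q j A) :
    ∀ S : Set (∀ j, Ω j), MeasurableSet S →
      Measure.pi P S ≤ ENNReal.ofReal (Real.exp (∑ j, ε j)) * Measure.pi Q S := by
  intro S hS
  set c : Fin m → ENNReal := fun j => ENNReal.ofReal (Real.exp (ε j)) with hc
  -- the DP bound extends to arbitrary (not necessarily measurable) sets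
  have hle : ∀ j (s : Set (Ω j)), P j s ≤ c j * Q j s := by
    intro j s
    calc P j s ≤ P j (toMeasurable (Q j) s) :=
          measure_mono (subset_toMeasurable _ _)
      _ ≤ c j * Q j (toMeasurable (Q j) s) :=
          hdp j _ (measurableSet_toMeasurable _ _)
      _ = c j * Q j s := by rw [measure_toMeasurable]
  set μ' : ∀ j, Measure (Ω j) := fun j => c j • Q j with hμ'
  haveI : ∀ j, IsFiniteMeasure (μ' j) := by
    intro j
    refine ⟨?_⟩
    simp only [hμ', Measure.smul_apply, smul_eq_mul, measure_univ, mul_one]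
    exact ENNReal.ofReal_lt_top
  have hprod : Measure.pi μ' = (∏ j, c j) • Measure.pi Q := by
    refine (Measure.pi_eq (μ := μ') fun s hs => ?_)
    simp only [Measure.smul_apply, smul_eq_mul, Measure.pi_pi, hμ',
      Finset.prod_mul_distrib]
  have houter : (Measure.pi P).toOuterMeasure ≤
      OuterMeasure.pi fun j => (μ' j).toOuterMeasure := by
    rw [OuterMeasure.le_pi]
    intro s _
    calc (Measure.pi P).toOuterMeasure (Set.pi Set.univ s)
        = Measure.pi P (Set.pi Set.univ s) := rfl
      _ = ∏ j, P j (s j) := Measure.pi_pi P s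
      _ ≤ ∏ j, (μ' j) (s j) := by
          refine Finset.prod_le_prod' fun j _ => ?_
          simpa [hμ', Measure.smul_apply] using hle j (s j)
      _ = ∏ j, (μ' j).toOuterMeasure (s j) := rfl
  have hle_pi : Measure.pi P S ≤ Measure.pi μ' S := by
    have h1 : Measure.pi μ' S =
        (OuterMeasure.pi fun j => (μ' j).toOuterMeasure) S := by
      rw [Measure.pi, toMeasure_apply _ _ hS]
    rw [h1]
    exact houter S
  have hcs : (∏ j, c j) = ENNReal.ofReal (Real.exp (∑ j, ε j)) := by
    rw [Real.exp_sum, ← ENNReal.ofReal_prod_of_nonneg]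
    intro j _
    exact (Real.exp_pos _).le
  calc Measure.pi P S ≤ Measure.pi μ' S := hle_pi
    _ = (∏ j, c j) * Measure.pi Q S := by rw [hprod]; rfl
    _ = ENNReal.ofReal (Real.exp (∑ j, ε j)) * Measure.pi Q S := by rw [hcs]
end

section
/- Let 0 < ε < 1, set L = log((1+ε)/(1−ε)), define f(α) = α + ε(α+1) − log(e^{2ε(α+1)} − 1) and g(α) = α − 1 + εα − log(e^{2εα} − 1), and let α₁* = L/(2ε) − 1 and α₂* = L/(2ε) be their respective stationary points. Then the two stationary values coincide: f(α₁*) = g(α₂*) = (1/(2ε) + 1/2) · L − 1 − log(2ε/(1−ε)); i.e., both expansions of the Chernoff differential-privacy upper bound yield the same optimal value C*_ub, reflecting the symmetry of Chernoff information. -/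
open Real

/-- for `0 < ε < 1` and `L = log((1+ε)/(1−ε))`, the stationary values of
`f(α) = α + ε(α+1) − log(e^{2ε(α+1)} − 1)` at `α₁* = L/(2ε) − 1` and of
`g(α) = α − 1 + εα − log(e^{2εα} − 1)` at `α₂* = L/(2ε)` coincide:
`f(α₁*) = g(α₂*) = (1/(2ε) + 1/2) L − 1 − log(2ε/(1−ε))`. -/
theorem stationary_values_coincide (ε : ℝ) (hε : 0 < ε) (hε1 : ε < 1) :
    let L := Real.log ((1 + ε) / (1 - ε))
    let f := fun α : ℝ => α + ε * (α + 1) - Real.log (Real.exp (2 * ε * (α + 1)) - 1)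
    let g := fun α : ℝ => α - 1 + ε * α - Real.log (Real.exp (2 * ε * α) - 1)
    f (L / (2 * ε) - 1) = g (L / (2 * ε)) ∧
    g (L / (2 * ε)) = (1 / (2 * ε) + 1 / 2) * L - 1 - Real.log (2 * ε / (1 - ε)) := by
  intro L f g
  have h1ε : (0:ℝ) < 1 - ε := by linarith
  have hne : (2 * ε) ≠ 0 := by positivity
  have harg : 2 * ε * (L / (2 * ε)) = L := by field_simp
  have hexp : Real.exp L = (1 + ε) / (1 - ε) := by
    rw [Real.exp_log (by positivity)]
  have hdiff : (1 + ε) / (1 - ε) - 1 = 2 * ε / (1 - ε) := by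
    field_simp; ring
  constructor
  · show _ = _
    simp only [f, g]
    have : L / (2 * ε) - 1 + 1 = L / (2 * ε) := by ring
    rw [this]
  · show _ = _
    simp only [g, harg, hexp, hdiff]
    field_simp
    ring
end

section
/- Let μ₀, μ₁ ∈ ℝ, b > 0 and θ > 0, and let p be the Laplace density with location μ₀ and scale b and q the Laplace density with location μ₁ and scale θb. Then the Kullback–Leibler divergence between the corresponding distributions is D(P‖Q) = ∫_ℝ p(x) log(p(x)/q(x)) dx = log θ − 1 + |Δμ|/(θb) + (1/θ) e^{−|Δμ|/b}, where Δμ = μ₁ − μ₀. -/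
open Real MeasureTheory Set

lemma texp_tendsto : Filter.Tendsto (fun t : ℝ => -(t+1) * Real.exp (-t)) Filter.atTop (nhds 0) := by
  have h1 := Real.tendsto_pow_mul_exp_neg_atTop_nhds_zero 1
  have h0 := Real.tendsto_pow_mul_exp_neg_atTop_nhds_zero 0
  have := (h1.add h0).neg
  simp only [pow_one, pow_zero, one_mul, neg_zero, add_zero] at this
  convert this using 2 with t
  ring

lemma texp_hasDeriv (x : ℝ) : HasDerivAt (fun t : ℝ => -(t+1) * Real.exp (-t)) (x * Real.exp (-x)) x := by
  have h : HasDerivAt (fun t : ℝ => -(t+1) * Real.exp (-t))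
      (-1 * Real.exp (-x) + -(x+1) * (Real.exp (-x) * -1)) x :=
    (((hasDerivAt_id x).add_const 1).neg).mul ((Real.hasDerivAt_exp (-x)).comp x ((hasDerivAt_id x).neg))
  convert h using 1
  ring

lemma texp_integrableOn_Ioi (c : ℝ) : IntegrableOn (fun t : ℝ => t * Real.exp (-t)) (Ioi c) := by
  have hm : IntegrableOn (fun t : ℝ => t * Real.exp (-t)) (Ioi (max c 0)) := by
    refine integrableOn_Ioi_deriv_of_nonneg' (fun x _ => texp_hasDeriv x) ?_ texp_tendsto
    intro x hx
    have : (0:ℝ) ≤ x := le_of_lt (lt_of_le_of_lt (le_max_right c 0) hx)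
    positivity
  have hc : IntegrableOn (fun t : ℝ => t * Real.exp (-t)) (Ioc c (max c 0)) :=
    (Continuous.integrableOn_Ioc (by continuity))
  have := hc.union hm
  rwa [Ioc_union_Ioi_eq_Ioi (le_max_left c 0)] at this

lemma texp_integral_Ioi (c : ℝ) : ∫ t in Ioi c, t * Real.exp (-t) = (c+1) * Real.exp (-c) := by
  have := integral_Ioi_of_hasDerivAt_of_tendsto' (fun x (_ : x ∈ Ici c) => texp_hasDeriv x)
    (texp_integrableOn_Ioi c) texp_tendsto
  rw [this]; ring

lemma exp_integrableOn_Ioi (c : ℝ) : IntegrableOn (fun t : ℝ => Real.exp (-t)) (Ioi c) := by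
  simpa using exp_neg_integrableOn_Ioi c (b := 1) one_pos

-- transport integrability from Ici 0 to Iic 0 via negation
lemma intOn_Iic_of_neg {f : ℝ → ℝ} (h : IntegrableOn (fun x => f (-x)) (Ici (0:ℝ))) :
    IntegrableOn f (Iic (0:ℝ)) := by
  have m : MeasurableEmbedding (Neg.neg : ℝ → ℝ) := (Homeomorph.neg ℝ).measurableEmbedding
  rw [show (volume : Measure ℝ) = Measure.map Neg.neg volume from (Measure.map_neg_eq_self _).symm,
    m.integrableOn_map_iff]
  simpa [Function.comp_def, neg_preimage, neg_Iic, neg_zero] using h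

lemma exp_abs_integrable : Integrable (fun t : ℝ => Real.exp (-|t|)) := by
  have hIoi : IntegrableOn (fun t : ℝ => Real.exp (-|t|)) (Ioi (0:ℝ)) :=
    (exp_integrableOn_Ioi 0).congr_fun (fun x hx => by
      rw [abs_of_pos (mem_Ioi.mp hx)]) measurableSet_Ioi
  have hIic : IntegrableOn (fun t : ℝ => Real.exp (-|t|)) (Iic (0:ℝ)) := by
    apply intOn_Iic_of_neg
    simpa [abs_neg] using (integrableOn_Ici_iff_integrableOn_Ioi).mpr hIoi
  have := hIic.union hIoi
  rwa [Iic_union_Ioi, integrableOn_univ] at this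

lemma exp_abs_integral : ∫ t : ℝ, Real.exp (-|t|) = 2 := by
  rw [integral_comp_abs (f := fun t => Real.exp (-t)), integral_exp_neg_Ioi_zero, mul_one]

-- Ioc split for the two base functions
lemma exp_integral_Ioc {a : ℝ} (ha : 0 ≤ a) :
    ∫ t in Ioc (0:ℝ) a, Real.exp (-t) = 1 - Real.exp (-a) := by
  have hu := setIntegral_union (f := fun t : ℝ => Real.exp (-t)) (Ioc_disjoint_Ioi (le_refl a))
    measurableSet_Ioi ((exp_integrableOn_Ioi 0).mono_set Ioc_subset_Ioi_self)
    (exp_integrableOn_Ioi a)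
  rw [Ioc_union_Ioi_eq_Ioi ha] at hu
  have h0 : ∫ t in Ioi (0:ℝ), Real.exp (-t) = 1 := by
    simpa using integral_exp_neg_Ioi 0
  rw [h0, integral_exp_neg_Ioi] at hu
  linarith

lemma texp_integral_Ioc {a : ℝ} (ha : 0 ≤ a) :
    ∫ t in Ioc (0:ℝ) a, t * Real.exp (-t) = 1 - (a+1) * Real.exp (-a) := by
  have hu := setIntegral_union (f := fun t : ℝ => t * Real.exp (-t)) (Ioc_disjoint_Ioi (le_refl a))
    measurableSet_Ioi ((texp_integrableOn_Ioi 0).mono_set Ioc_subset_Ioi_self)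
    (texp_integrableOn_Ioi a)
  rw [Ioc_union_Ioi_eq_Ioi ha, texp_integral_Ioi 0, texp_integral_Ioi a] at hu
  simp only [zero_add, neg_zero, Real.exp_zero, one_mul] at hu
  linarith

lemma laplace_abs_int_nonneg {a : ℝ} (ha : 0 ≤ a) :
    Integrable (fun t : ℝ => Real.exp (-|t|) * |t - a|) ∧
      ∫ t : ℝ, Real.exp (-|t|) * |t - a| = 2*a + 2*Real.exp (-a) := by
  set f : ℝ → ℝ := fun t => Real.exp (-|t|) * |t - a| with hf
  -- Ioi a piece
  have heqA : EqOn (fun t : ℝ => t * Real.exp (-t) - a * Real.exp (-t)) f (Ioi a) := by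
    intro t ht
    have h1 : (0:ℝ) < t := lt_of_le_of_lt ha ht
    have h2 : a ≤ t := le_of_lt ht
    simp only [hf, abs_of_pos h1, abs_of_nonneg (sub_nonneg.mpr h2)]
    ring
  have hsubA : IntegrableOn (fun t : ℝ => t * Real.exp (-t) - a * Real.exp (-t)) (Ioi a) :=
    (texp_integrableOn_Ioi a).sub ((exp_integrableOn_Ioi a).const_mul a)
  have hintA : IntegrableOn f (Ioi a) := IntegrableOn.congr_fun hsubA heqA measurableSet_Ioi
  have hvalA : ∫ t in Ioi a, f t = Real.exp (-a) := by
    rw [← setIntegral_congr_fun measurableSet_Ioi heqA,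
      integral_sub (texp_integrableOn_Ioi a) ((exp_integrableOn_Ioi a).const_mul a),
      texp_integral_Ioi, MeasureTheory.integral_const_mul, integral_exp_neg_Ioi]
    ring
  -- Ioc 0 a piece
  have hcont : Continuous f := by
    apply Continuous.mul
    · exact Real.continuous_exp.comp (continuous_abs.neg)
    · exact (continuous_id.sub continuous_const).abs
  have hintB : IntegrableOn f (Ioc 0 a) := hcont.integrableOn_Ioc
  have heqB : EqOn f (fun t : ℝ => a * Real.exp (-t) - t * Real.exp (-t)) (Ioc 0 a) := by
    intro t ht
    simp only [hf, abs_of_pos ht.1, abs_of_nonpos (sub_nonpos.mpr ht.2)]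
    ring
  have hvalB : ∫ t in Ioc (0:ℝ) a, f t = a - 1 + Real.exp (-a) := by
    rw [setIntegral_congr_fun measurableSet_Ioc heqB,
      integral_sub ((exp_integrableOn_Ioi 0).mono_set Ioc_subset_Ioi_self |>.const_mul a)
        ((texp_integrableOn_Ioi 0).mono_set Ioc_subset_Ioi_self),
      MeasureTheory.integral_const_mul, exp_integral_Ioc ha, texp_integral_Ioc ha]
    ring
  -- Iic 0 piece
  have heqC : EqOn (fun t : ℝ => t * Real.exp (-t) + a * Real.exp (-t))
      (fun x : ℝ => f (-x)) (Ici (0:ℝ)) := by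
    intro t ht
    have ht' : (0:ℝ) ≤ t := ht
    simp only [hf, abs_neg, abs_of_nonneg ht']
    rw [abs_of_nonpos (by linarith : -t - a ≤ 0)]
    ring
  have hintC : IntegrableOn f (Iic 0) := by
    apply intOn_Iic_of_neg
    have haddC : IntegrableOn (fun t : ℝ => t * Real.exp (-t) + a * Real.exp (-t)) (Ici 0) := by
      rw [integrableOn_Ici_iff_integrableOn_Ioi]
      exact (texp_integrableOn_Ioi 0).add ((exp_integrableOn_Ioi 0).const_mul a)
    exact IntegrableOn.congr_fun haddC heqC measurableSet_Ici
  -- Iic 0 value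
  have hvalC : ∫ t in Iic (0:ℝ), f t = 1 + a := by
    have key : ∫ x in Iic (0:ℝ), (fun y : ℝ => Real.exp (-|y|) * |-y - a|) (-x)
        = ∫ y in Ioi (-(0:ℝ)), Real.exp (-|y|) * |-y - a| :=
      integral_comp_neg_Iic 0 (fun y : ℝ => Real.exp (-|y|) * |-y - a|)
    have hL : ∫ x in Iic (0:ℝ), (fun y : ℝ => Real.exp (-|y|) * |-y - a|) (-x)
        = ∫ t in Iic (0:ℝ), f t := by
      apply setIntegral_congr_fun measurableSet_Iic
      intro t _
      simp only [hf, abs_neg, neg_neg]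
    have hR : ∫ y in Ioi (-(0:ℝ)), Real.exp (-|y|) * |-y - a|
        = ∫ y in Ioi (0:ℝ), (fun y : ℝ => y * Real.exp (-y) + a * Real.exp (-y)) y := by
      rw [neg_zero]
      apply setIntegral_congr_fun measurableSet_Ioi
      intro y hy
      have hy' : (0:ℝ) < y := hy
      show Real.exp (-|y|) * |-y - a| = y * Real.exp (-y) + a * Real.exp (-y)
      rw [abs_of_pos hy', abs_of_nonpos (by linarith : -y - a ≤ 0)]
      ring
    rw [← hL, key, hR,
      integral_add (texp_integrableOn_Ioi 0) ((exp_integrableOn_Ioi 0).const_mul a),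
      texp_integral_Ioi, MeasureTheory.integral_const_mul, integral_exp_neg_Ioi]
    simp [Real.exp_zero]
  -- assemble
  have hintIoi0 : IntegrableOn f (Ioi 0) := by
    have := hintB.union hintA
    rwa [Ioc_union_Ioi_eq_Ioi ha] at this
  have hvalIoi0 : ∫ t in Ioi (0:ℝ), f t = (a - 1 + Real.exp (-a)) + Real.exp (-a) := by
    have := setIntegral_union (f := f) (Ioc_disjoint_Ioi (le_refl a)) measurableSet_Ioi hintB hintA
    rw [Ioc_union_Ioi_eq_Ioi ha] at this
    rw [this, hvalB, hvalA]
  have hint : Integrable f := by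
    have := hintC.union hintIoi0
    rwa [Iic_union_Ioi, integrableOn_univ] at this
  refine ⟨hint, ?_⟩
  rw [← intervalIntegral.integral_Iic_add_Ioi hintC hintIoi0, hvalC, hvalIoi0]
  ring

lemma laplace_abs_integrable (a : ℝ) :
    Integrable (fun t : ℝ => Real.exp (-|t|) * |t - a|) := by
  rcases le_or_gt 0 a with ha | ha
  · exact (laplace_abs_int_nonneg ha).1
  · have hg := (laplace_abs_int_nonneg (by linarith : (0:ℝ) ≤ -a)).1
    have := (integrable_comp_mul_left_iff
      (fun y : ℝ => Real.exp (-|y|) * |y - -a|) (by norm_num : (-1:ℝ) ≠ 0)).2 hg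
    have heq : (fun x : ℝ => Real.exp (-|(-1)*x|) * |(-1)*x - -a|)
        = fun t : ℝ => Real.exp (-|t|) * |t - a| := by
      funext x
      rw [neg_one_mul, abs_neg, show -x - -a = -(x - a) by ring, abs_neg]
    rwa [heq] at this

lemma laplace_abs_integral (a : ℝ) :
    ∫ t : ℝ, Real.exp (-|t|) * |t - a| = 2*|a| + 2*Real.exp (-|a|) := by
  rcases le_or_gt 0 a with ha | ha
  · rw [(laplace_abs_int_nonneg ha).2, abs_of_nonneg ha]
  · have key := integral_neg_eq_self (fun y : ℝ => Real.exp (-|y|) * |y - -a|) volume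
    have heq : (fun x : ℝ => Real.exp (-|(-x)|) * |(-x) - -a|)
        = fun t : ℝ => Real.exp (-|t|) * |t - a| := by
      funext x
      rw [abs_neg, show -x - -a = -(x - a) by ring, abs_neg]
    rw [heq] at key
    rw [key, (laplace_abs_int_nonneg (by linarith : (0:ℝ) ≤ -a)).2,
      abs_of_neg ha]

/-- the Kullback–Leibler divergence between the Laplace distribution `P` with
location `μ₀` and scale `b` and the Laplace distribution `Q` with location `μ₁` and scale
`θb` equals `log θ − 1 + |Δμ|/(θb) + (1/θ) e^{−|Δμ|/b}` with `Δμ = μ₁ − μ₀`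
(integral w.r.t. Lebesgue measure on ℝ). -/
theorem kl_laplace (μ₀ μ₁ b θ : ℝ) (hb : 0 < b) (hθ : 0 < θ) :
    ∫ x : ℝ, (1 / (2 * b) * Real.exp (-|x - μ₀| / b))
        * Real.log ((1 / (2 * b) * Real.exp (-|x - μ₀| / b))
            / (1 / (2 * (θ * b)) * Real.exp (-|x - μ₁| / (θ * b))))
      = Real.log θ - 1 + |μ₁ - μ₀| / (θ * b) + (1 / θ) * Real.exp (-|μ₁ - μ₀| / b) := by
  have hb' : b ≠ 0 := ne_of_gt hb
  have hθ' : θ ≠ 0 := ne_of_gt hθ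
  set a : ℝ := (μ₁ - μ₀) / b with ha_def
  set F : ℝ → ℝ := fun t => Real.log θ * (1/(2*b) * Real.exp (-|t|))
      - 1/(2*b) * (Real.exp (-|t|) * |t|) + 1/(2*b*θ) * (Real.exp (-|t|) * |t - a|) with hF_def
  have hpt : ∀ x : ℝ, (1 / (2 * b) * Real.exp (-|x - μ₀| / b))
        * Real.log ((1 / (2 * b) * Real.exp (-|x - μ₀| / b))
            / (1 / (2 * (θ * b)) * Real.exp (-|x - μ₁| / (θ * b))))
      = F ((x - μ₀) / b) := by
    intro x
    have hratio : (1 / (2 * b) * Real.exp (-|x - μ₀| / b))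
          / (1 / (2 * (θ * b)) * Real.exp (-|x - μ₁| / (θ * b)))
        = θ * Real.exp (-|x - μ₀| / b - -|x - μ₁| / (θ * b)) := by
      rw [Real.exp_sub]
      field_simp
    rw [hratio, Real.log_mul hθ' (Real.exp_ne_zero _), Real.log_exp]
    have h1 : |(x - μ₀) / b| = |x - μ₀| / b := by
      rw [abs_div, abs_of_pos hb]
    have h2 : |(x - μ₀) / b - a| = |x - μ₁| / b := by
      rw [ha_def, div_sub_div_same, show x - μ₀ - (μ₁ - μ₀) = x - μ₁ by ring,
        abs_div, abs_of_pos hb]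
    simp only [hF_def, h1, h2]
    rw [neg_div, neg_div]
    field_simp
    ring
  calc ∫ x : ℝ, (1 / (2 * b) * Real.exp (-|x - μ₀| / b))
        * Real.log ((1 / (2 * b) * Real.exp (-|x - μ₀| / b))
            / (1 / (2 * (θ * b)) * Real.exp (-|x - μ₁| / (θ * b))))
      = ∫ x : ℝ, F ((x - μ₀) / b) := by
        exact integral_congr_ae (Filter.Eventually.of_forall hpt)
    _ = ∫ x : ℝ, F (x / b) := integral_sub_right_eq_self (fun y => F (y / b)) μ₀
    _ = |b| • ∫ t : ℝ, F t := Measure.integral_comp_div F b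
    _ = Real.log θ - 1 + |μ₁ - μ₀| / (θ * b) + (1 / θ) * Real.exp (-|μ₁ - μ₀| / b) := by
        have habs0 : ∫ t : ℝ, Real.exp (-|t|) * |t| = 2 := by
          have := laplace_abs_integral 0
          simpa using this
        have hint0 : Integrable (fun t : ℝ => Real.exp (-|t|) * |t|) := by
          have := laplace_abs_integrable 0
          simpa using this
        have hI1 : Integrable (fun t : ℝ => Real.log θ * (1/(2*b) * Real.exp (-|t|))) :=
          (exp_abs_integrable.const_mul (1/(2*b))).const_mul (Real.log θ)
        have hI2 : Integrable (fun t : ℝ => 1/(2*b) * (Real.exp (-|t|) * |t|)) :=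
          hint0.const_mul _
        have hI3 : Integrable (fun t : ℝ => 1/(2*b*θ) * (Real.exp (-|t|) * |t - a|)) :=
          (laplace_abs_integrable a).const_mul _
        have hFval : ∫ t : ℝ, F t
            = Real.log θ * (1/(2*b) * 2) - 1/(2*b) * 2
              + 1/(2*b*θ) * (2*|a| + 2*Real.exp (-|a|)) := by
          have hI12 : Integrable (fun t : ℝ => Real.log θ * (1/(2*b) * Real.exp (-|t|))
              - 1/(2*b) * (Real.exp (-|t|) * |t|)) := hI1.sub hI2
          simp only [hF_def]
          rw [MeasureTheory.integral_add hI12 hI3,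
            MeasureTheory.integral_sub hI1 hI2,
            MeasureTheory.integral_const_mul, MeasureTheory.integral_const_mul,
            MeasureTheory.integral_const_mul, MeasureTheory.integral_const_mul,
            exp_abs_integral, habs0, laplace_abs_integral a]
        rw [hFval]
        have haa : |a| = |μ₁ - μ₀| / b := by rw [ha_def, abs_div, abs_of_pos hb]
        rw [haa, abs_of_pos hb, smul_eq_mul]
        rw [show -(|μ₁ - μ₀| / b) = -|μ₁ - μ₀| / b by rw [neg_div]]
        field_simp
        ring
end

section
/- Let μ₀, μ₁ ∈ ℝ and β > 0, and let p and q be the Laplace densities with common scale β and locations μ₀ and μ₁ respectively. Then the Bhattacharyya coefficient satisfies ∫_ℝ √(p(x) q(x)) dx = e^{−u} (1 + u), where u = |μ₁ − μ₀|/(2β). -/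
/-!
The geometric mean of the two densities is `(2β)⁻¹ exp (-(|x - μ₀| + |x - μ₁|) / (2β))`.
For `a ≤ b` the sum `|x - a| + |x - b|` equals `b - a` on `[a, b]` and grows with slope `2`
outside it, so the integral is a plateau of width `b - a` plus two exponential tails, each
contributing `β e^{-(b - a)/(2β)}`.
-/

open Real MeasureTheory Set

lemma sqrt_mul_exp_mul_mul_exp {c : ℝ} (hc : 0 ≤ c) (u v : ℝ) :
    √((c * exp u) * (c * exp v)) = c * exp ((u + v) / 2) := by
  rw [mul_mul_mul_comm, ← exp_add, sqrt_mul (mul_self_nonneg c), sqrt_mul_self hc, exp_half]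

lemma exp_mul_sub_eq_div (r c x : ℝ) : exp (r * (x - c)) = exp (r * x) / exp (r * c) := by
  rw [← exp_sub, mul_sub]

lemma integrableOn_exp_mul_sub_Iic {r : ℝ} (hr : 0 < r) (c : ℝ) :
    IntegrableOn (fun x ↦ exp (r * (x - c))) (Iic c) := by
  simp_rw [exp_mul_sub_eq_div]
  exact (integrableOn_exp_mul_Iic hr c).div_const _

lemma integral_exp_mul_sub_Iic {r : ℝ} (hr : 0 < r) (c : ℝ) :
    ∫ x in Iic c, exp (r * (x - c)) = r⁻¹ := by
  simp_rw [exp_mul_sub_eq_div, integral_div, integral_exp_mul_Iic hr]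
  field_simp

lemma integrableOn_exp_mul_sub_Ioi {r : ℝ} (hr : r < 0) (c : ℝ) :
    IntegrableOn (fun x ↦ exp (r * (x - c))) (Ioi c) := by
  simp_rw [exp_mul_sub_eq_div]
  exact (integrableOn_exp_mul_Ioi hr c).div_const _

lemma integral_exp_mul_sub_Ioi {r : ℝ} (hr : r < 0) (c : ℝ) :
    ∫ x in Ioi c, exp (r * (x - c)) = -r⁻¹ := by
  simp_rw [exp_mul_sub_eq_div, integral_div, integral_exp_mul_Ioi hr]
  field_simp

lemma integral_eq_Iic_add_intervalIntegral_add_Ioi {E : Type*} [NormedAddCommGroup E]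
    [NormedSpace ℝ E] {f : ℝ → E} {a b : ℝ} (hab : a ≤ b) (ha : IntegrableOn f (Iic a))
    (hm : IntervalIntegrable f volume a b) (hb : IntegrableOn f (Ioi b)) :
    ∫ x, f x = (∫ x in Iic a, f x) + (∫ x in a..b, f x) + ∫ x in Ioi b, f x := by
  have ha' : IntegrableOn f (Ioi a) := by
    rw [← Ioc_union_Ioi_eq_Ioi hab]
    exact ((intervalIntegrable_iff_integrableOn_Ioc_of_le hab).1 hm).union hb
  rw [add_assoc, intervalIntegral.integral_interval_add_Ioi' hm hb,
    intervalIntegral.integral_Iic_add_Ioi ha ha']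

theorem integral_exp_neg_abs_sub_add_abs_sub {s : ℝ} (hs : 0 < s) (a b : ℝ) :
    ∫ x, exp (-(|x - a| + |x - b|) / s) = exp (-|b - a| / s) * (s + |b - a|) := by
  wlog hab : a ≤ b generalizing a b
  · simpa only [add_comm |_ - b|, abs_sub_comm a b] using this b a (le_of_not_ge hab)
  set K := exp (-(b - a) / s) with hK
  have hleft : EqOn (fun x ↦ exp (-(|x - a| + |x - b|) / s))
      (fun x ↦ K * exp (2 / s * (x - a))) (Iic a) := fun x (hx : x ≤ a) ↦ by
    dsimp only
    rw [abs_of_nonpos (by linarith : x - a ≤ 0), abs_of_nonpos (by linarith : x - b ≤ 0), hK,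
      ← exp_add]
    ring_nf
  have hmid : EqOn (fun x ↦ exp (-(|x - a| + |x - b|) / s)) (fun _ ↦ K) (uIcc a b) := by
    rintro x ⟨hax, hxb⟩
    rw [inf_eq_left.2 hab] at hax
    rw [sup_eq_right.2 hab] at hxb
    dsimp only
    rw [abs_of_nonneg (by linarith : 0 ≤ x - a), abs_of_nonpos (by linarith : x - b ≤ 0), hK]
    ring_nf
  have hright : EqOn (fun x ↦ exp (-(|x - a| + |x - b|) / s))
      (fun x ↦ K * exp (-2 / s * (x - b))) (Ioi b) := fun x (hx : b < x) ↦ by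
    dsimp only
    rw [abs_of_nonneg (by linarith : 0 ≤ x - a), abs_of_nonneg (by linarith : 0 ≤ x - b), hK,
      ← exp_add]
    ring_nf
  have hpos : 0 < 2 / s := by positivity
  have hneg : -2 / s < 0 := div_neg_of_neg_of_pos (by norm_num) hs
  rw [integral_eq_Iic_add_intervalIntegral_add_Ioi hab
      (IntegrableOn.congr_fun ((integrableOn_exp_mul_sub_Iic hpos a).const_mul K) hleft.symm
        measurableSet_Iic)
      (intervalIntegrable_const.congr (hmid.symm.mono uIoc_subset_uIcc))
      (IntegrableOn.congr_fun ((integrableOn_exp_mul_sub_Ioi hneg b).const_mul K) hright.symm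
        measurableSet_Ioi),
    setIntegral_congr_fun measurableSet_Iic hleft, setIntegral_congr_fun measurableSet_Ioi hright,
    intervalIntegral.integral_congr hmid, integral_const_mul, integral_const_mul,
    integral_exp_mul_sub_Iic hpos, integral_exp_mul_sub_Ioi hneg, intervalIntegral.integral_const,
    abs_of_nonneg (sub_nonneg.2 hab), ← hK, smul_eq_mul]
  field_simp
  ring

/-- the Bhattacharyya coefficient of two Laplace densities with common scale
`β` and locations `μ₀`, `μ₁` equals `e^{−u}(1 + u)` with `u = |μ₁ − μ₀|/(2β)`
(integral w.r.t. Lebesgue measure on ℝ). -/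
theorem bhattacharyya_laplace (μ₀ μ₁ β : ℝ) (hβ : 0 < β) :
    ∫ x : ℝ, Real.sqrt ((1 / (2 * β) * Real.exp (-|x - μ₀| / β))
        * (1 / (2 * β) * Real.exp (-|x - μ₁| / β)))
      = Real.exp (-(|μ₁ - μ₀| / (2 * β))) * (1 + |μ₁ - μ₀| / (2 * β)) := by
  have hsqrt (x : ℝ) :
      √((1 / (2 * β) * exp (-|x - μ₀| / β)) * (1 / (2 * β) * exp (-|x - μ₁| / β)))
        = 1 / (2 * β) * exp (-(|x - μ₀| + |x - μ₁|) / (2 * β)) := by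
    rw [sqrt_mul_exp_mul_mul_exp (by positivity)]
    ring_nf
  simp_rw [hsqrt, integral_const_mul,
    integral_exp_neg_abs_sub_add_abs_sub (by positivity : 0 < 2 * β), neg_div]
  field_simp
end

section
/- Let μ₀, μ₁ ∈ ℝ with μ₀ ≠ μ₁ and β > 0, and let P and Q be the Laplace distributions with common scale β and locations μ₀ and μ₁ respectively, with densities p and q with respect to Lebesgue measure. Then the Chernoff information equals C(P,Q) = sup_{α ∈ (0,1)} (− log ∫_ℝ p(x)^α q(x)^{1−α} dx) = u − log(1 + u), where u = |μ₁ − μ₀|/(2β); moreover the supremum is attained at α = 1/2. -/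
open Real

namespace ChernoffLaplaceAux

open MeasureTheory Set

/-- The reduced integrand. -/
noncomputable def g (a c : ℝ) : ℝ → ℝ := fun y => Real.exp (-(a * |y| + (1 - a) * |y - c|))

lemma g_cont (a c : ℝ) : Continuous (g a c) := by
  unfold g; fun_prop

lemma g_left {a c y : ℝ} (hy : y ≤ 0) (hc : 0 ≤ c) :
    g a c y = Real.exp (-((1 - a) * c)) * Real.exp y := by
  unfold g
  rw [abs_of_nonpos hy, abs_of_nonpos (by linarith), ← Real.exp_add]
  congr 1; ring

lemma g_mid {a c y : ℝ} (hy : 0 ≤ y) (hyc : y ≤ c) :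
    g a c y = Real.exp (-((1 - a) * c)) * Real.exp ((1 - 2 * a) * y) := by
  unfold g
  rw [abs_of_nonneg hy, abs_of_nonpos (by linarith), ← Real.exp_add]
  congr 1; ring

lemma g_right {a c y : ℝ} (hy : c ≤ y) (hc : 0 ≤ c) :
    g a c y = Real.exp ((1 - a) * c) * Real.exp (-y) := by
  unfold g
  rw [abs_of_nonneg (by linarith), abs_of_nonneg (by linarith), ← Real.exp_add]
  congr 1; ring

lemma g_intOn_Iic {a c : ℝ} (hc : 0 ≤ c) : IntegrableOn (g a c) (Iic 0) := by
  have h : IntegrableOn (fun y => Real.exp (-((1 - a) * c)) * Real.exp y) (Iic (0:ℝ)) :=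
    (integrableOn_exp_Iic 0).const_mul _
  exact h.congr_fun (fun y hy => (g_left hy hc).symm) measurableSet_Iic

lemma g_intOn_Ioi {a c : ℝ} (hc : 0 ≤ c) : IntegrableOn (g a c) (Ioi c) := by
  have h0 : IntegrableOn (fun y : ℝ => Real.exp (-1 * y)) (Ioi c) :=
    exp_neg_integrableOn_Ioi c one_pos
  have h : IntegrableOn (fun y : ℝ => Real.exp ((1 - a) * c) * Real.exp (-1 * y)) (Ioi c) :=
    h0.const_mul _
  refine h.congr_fun (fun y hy => ?_) measurableSet_Ioi
  rw [g_right (le_of_lt hy) hc]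
  norm_num

lemma g_intOn_Icc {a c : ℝ} : IntegrableOn (g a c) (Icc 0 c) :=
  (g_cont a c).integrableOn_Icc

lemma g_integrable {a c : ℝ} (hc : 0 ≤ c) : Integrable (g a c) := by
  rw [← integrableOn_univ, ← Set.Iic_union_Ioi (a := (0:ℝ))]
  refine (g_intOn_Iic hc).union ?_
  rw [← Set.Ioc_union_Ioi_eq_Ioi hc]
  exact (g_intOn_Icc.mono_set Set.Ioc_subset_Icc_self).union (g_intOn_Ioi hc)

lemma J_eq {a c : ℝ} (hc : 0 < c) :
    ∫ y : ℝ, g a c y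
      = Real.exp (-((1 - a) * c)) + Real.exp (-(a * c))
        + Real.exp (-((1 - a) * c)) * ∫ x in (0:ℝ)..c, Real.exp ((1 - 2 * a) * x) := by
  have hIoi : IntegrableOn (g a c) (Ioi 0) := by
    rw [← Set.Ioc_union_Ioi_eq_Ioi hc.le]
    exact (g_intOn_Icc.mono_set Set.Ioc_subset_Icc_self).union (g_intOn_Ioi hc.le)
  rw [← intervalIntegral.integral_Iic_add_Ioi (b := 0) (g_intOn_Iic hc.le) hIoi]
  rw [← Set.Ioc_union_Ioi_eq_Ioi hc.le,
    setIntegral_union (Set.Ioc_disjoint_Ioi le_rfl) measurableSet_Ioi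
      (g_intOn_Icc.mono_set Set.Ioc_subset_Icc_self) (g_intOn_Ioi hc.le)]
  have h1 : ∫ y in Iic (0:ℝ), g a c y = Real.exp (-((1 - a) * c)) := by
    rw [setIntegral_congr_fun measurableSet_Iic (fun y hy => g_left hy hc.le),
      MeasureTheory.integral_const_mul, integral_exp_Iic 0, Real.exp_zero, mul_one]
  have h3 : ∫ y in Ioi c, g a c y = Real.exp (-(a * c)) := by
    rw [setIntegral_congr_fun measurableSet_Ioi (fun y hy => g_right (le_of_lt hy) hc.le),
      MeasureTheory.integral_const_mul, integral_exp_neg_Ioi c, ← Real.exp_add]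
    congr 1; ring
  have h2 : ∫ y in Ioc (0:ℝ) c, g a c y
      = Real.exp (-((1 - a) * c)) * ∫ x in (0:ℝ)..c, Real.exp ((1 - 2 * a) * x) := by
    rw [setIntegral_congr_fun measurableSet_Ioc
        (fun y hy => g_mid (le_of_lt hy.1) hy.2),
      MeasureTheory.integral_const_mul, intervalIntegral.integral_of_le hc.le]
  rw [h1, h2, h3]; ring

lemma J_half {c : ℝ} (hc : 0 < c) :
    ∫ y : ℝ, g (1/2) c y = (2 + c) * Real.exp (-(c / 2)) := by
  rw [J_eq hc]
  have hm : ((1:ℝ) - 2 * (1/2)) = 0 := by norm_num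
  have hmid : ∫ x in (0:ℝ)..c, Real.exp (((1:ℝ) - 2 * (1/2)) * x) = c := by
    simp [hm]
  rw [hmid, show ((1:ℝ) - 1/2) * c = c / 2 by ring, show ((1:ℝ)/2) * c = c / 2 by ring]
  ring

lemma J_ge {a c : ℝ} (ha0 : 0 < a) (ha1 : a < 1) (hc : 0 < c) :
    (2 + c) * Real.exp (-(c / 2)) ≤ ∫ y : ℝ, g a c y := by
  rw [J_eq hc]
  rcases eq_or_ne a (1/2) with rfl | ha
  · have hm : ((1:ℝ) - 2 * (1/2)) = 0 := by norm_num
    have hmid : ∫ x in (0:ℝ)..c, Real.exp (((1:ℝ) - 2 * (1/2)) * x) = c := by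
      simp [hm]
    rw [hmid, show ((1:ℝ) - 1/2) * c = c / 2 by ring, show ((1:ℝ)/2) * c = c / 2 by ring]
    apply le_of_eq; ring
  · have hk0 : (1 - 2 * a) ≠ 0 := by
      intro h; apply ha; linarith
    have hmid : ∫ x in (0:ℝ)..c, Real.exp ((1 - 2 * a) * x)
        = (Real.exp ((1 - 2 * a) * c) - 1) / (1 - 2 * a) := by
      rw [intervalIntegral.integral_comp_mul_left Real.exp hk0]
      rw [mul_zero]
      rw [show (∫ x in (0:ℝ)..((1 - 2 * a) * c), Real.exp x)
          = Real.exp ((1 - 2 * a) * c) - Real.exp 0 from _root_.integral_exp]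
      rw [Real.exp_zero, smul_eq_mul]
      field_simp
    rw [hmid]
    have hP : (0:ℝ) < Real.exp (-(c/2)) := Real.exp_pos _
    have e1 : Real.exp (-((1 - a) * c))
        = Real.exp (-(c/2)) * Real.exp ((2 * a - 1) * c / 2) := by
      rw [← Real.exp_add]; congr 1; ring
    have e2 : Real.exp (-(a * c))
        = Real.exp (-(c/2)) * Real.exp (-((2 * a - 1) * c / 2)) := by
      rw [← Real.exp_add]; congr 1; ring
    have e3 : Real.exp (-((1 - a) * c)) * Real.exp ((1 - 2 * a) * c)
        = Real.exp (-(c/2)) * Real.exp (-((2 * a - 1) * c / 2)) := by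
      rw [← Real.exp_add, ← Real.exp_add]; congr 1; ring
    have e4 : Real.exp (-((1 - a) * c)) * ((Real.exp ((1 - 2 * a) * c) - 1) / (1 - 2 * a))
        = Real.exp (-(c/2)) * ((Real.exp (-((2 * a - 1) * c / 2))
            - Real.exp ((2 * a - 1) * c / 2)) / (1 - 2 * a)) := by
      rw [mul_div_assoc', mul_sub, mul_one, e3, e1]; ring
    rw [e4, e1, e2]
    have hS : (2:ℝ) ≤ Real.exp ((2 * a - 1) * c / 2) + Real.exp (-((2 * a - 1) * c / 2)) := by
      have h := Real.one_le_cosh ((2 * a - 1) * c / 2)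
      rw [Real.cosh_eq] at h
      linarith
    have hD : c ≤ (Real.exp (-((2 * a - 1) * c / 2)) - Real.exp ((2 * a - 1) * c / 2))
        / (1 - 2 * a) := by
      rcases lt_or_gt_of_ne hk0 with hk | hk
      · -- 1 - 2a < 0, so t := (2a-1)c/2 > 0 and sinh t > t
        have ht : 0 < (2 * a - 1) * c / 2 := by nlinarith
        have hs := Real.self_lt_sinh_iff.mpr ht
        rw [Real.sinh_eq] at hs
        rw [le_div_iff_of_neg hk]
        nlinarith
      · -- 1 - 2a > 0, so t < 0 and sinh t < t
        have ht : (2 * a - 1) * c / 2 < 0 := by nlinarith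
        have hs := Real.sinh_lt_self_iff.mpr ht
        rw [Real.sinh_eq] at hs
        rw [le_div_iff₀ hk]
        nlinarith
    nlinarith [mul_le_mul_of_nonneg_left hS hP.le, mul_le_mul_of_nonneg_left hD hP.le]

lemma J_neg (a c : ℝ) : ∫ y : ℝ, g a c y = ∫ y : ℝ, g a (-c) y := by
  rw [← integral_neg_eq_self (g a c) volume]
  refine integral_congr_ae (Filter.Eventually.of_forall fun y => ?_)
  show g a c (-y) = g a (-c) y
  unfold g
  congr 1
  rw [abs_neg, show -y - c = -(y + c) by ring, abs_neg, show y - -c = y + c by ring]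

/-- Pointwise reduction of the rpow product. -/
lemma pointwise {β : ℝ} (hβ : 0 < β) (μ₀ μ₁ a x : ℝ) :
    (1 / (2 * β) * Real.exp (-|x - μ₀| / β)) ^ a
      * (1 / (2 * β) * Real.exp (-|x - μ₁| / β)) ^ (1 - a)
    = 1 / (2 * β) * Real.exp (-(a * |x - μ₀| + (1 - a) * |x - μ₁|) / β) := by
  have hb : (0:ℝ) < 1 / (2 * β) := by positivity
  have he : ∀ z w : ℝ, Real.exp z ^ w = Real.exp (z * w) := fun z w => by
    rw [Real.rpow_def_of_pos (Real.exp_pos z), Real.log_exp]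
  rw [Real.mul_rpow hb.le (Real.exp_pos _).le, Real.mul_rpow hb.le (Real.exp_pos _).le,
    he, he]
  have : (1 / (2 * β)) ^ a * Real.exp (-|x - μ₀| / β * a)
      * ((1 / (2 * β)) ^ (1 - a) * Real.exp (-|x - μ₁| / β * (1 - a)))
      = ((1 / (2 * β)) ^ a * (1 / (2 * β)) ^ (1 - a))
        * (Real.exp (-|x - μ₀| / β * a) * Real.exp (-|x - μ₁| / β * (1 - a))) := by ring
  rw [this, ← Real.rpow_add hb, ← Real.exp_add,
    show a + (1 - a) = (1:ℝ) by ring, Real.rpow_one]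
  congr 1
  field_simp
  ring

/-- Change of variables. -/
lemma cov {β : ℝ} (hβ : 0 < β) (μ₀ μ₁ a : ℝ) :
    ∫ x : ℝ, Real.exp (-(a * |x - μ₀| + (1 - a) * |x - μ₁|) / β)
      = β * ∫ y : ℝ, g a ((μ₁ - μ₀) / β) y := by
  have h1 : ∀ x : ℝ, Real.exp (-(a * |x - μ₀| + (1 - a) * |x - μ₁|) / β)
      = g a ((μ₁ - μ₀) / β) (β⁻¹ * (x + -μ₀)) := by
    intro x
    unfold g
    congr 1
    have hb : β ≠ 0 := hβ.ne'
    have e1 : β⁻¹ * (x + -μ₀) = (x - μ₀) / β := by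
      rw [div_eq_inv_mul]; ring
    have e2 : (x - μ₀) / β - (μ₁ - μ₀) / β = (x - μ₁) / β := by
      rw [div_sub_div_same]; congr 1; ring
    rw [e1, e2, abs_div, abs_div, abs_of_pos hβ]
    ring
  simp_rw [h1]
  rw [MeasureTheory.integral_add_right_eq_self
    (fun x : ℝ => g a ((μ₁ - μ₀) / β) (β⁻¹ * x)) (-μ₀)]
  rw [MeasureTheory.Measure.integral_comp_inv_mul_left (g a ((μ₁ - μ₀) / β)) β]
  rw [abs_of_pos hβ, smul_eq_mul]

/-- The master computation: value/bounds of the Bhattacharyya-type integral. -/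
lemma master {μ₀ μ₁ β : ℝ} (hβ : 0 < β) (hne : μ₀ ≠ μ₁) {a : ℝ}
    (ha0 : 0 < a) (ha1 : a < 1) :
    (∫ x : ℝ, (1 / (2 * β) * Real.exp (-|x - μ₀| / β)) ^ a
        * (1 / (2 * β) * Real.exp (-|x - μ₁| / β)) ^ (1 - a))
      = (1/2) * ∫ y : ℝ, g a (|μ₁ - μ₀| / β) y := by
  have h1 : ∀ x : ℝ, (1 / (2 * β) * Real.exp (-|x - μ₀| / β)) ^ a
      * (1 / (2 * β) * Real.exp (-|x - μ₁| / β)) ^ (1 - a)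
      = 1 / (2 * β) * Real.exp (-(a * |x - μ₀| + (1 - a) * |x - μ₁|) / β) :=
    pointwise hβ μ₀ μ₁ a
  simp_rw [h1]
  rw [MeasureTheory.integral_const_mul, cov hβ μ₀ μ₁ a]
  have hJ : ∫ y : ℝ, g a ((μ₁ - μ₀) / β) y = ∫ y : ℝ, g a (|μ₁ - μ₀| / β) y := by
    rcases abs_cases (μ₁ - μ₀) with ⟨h, _⟩ | ⟨h, _⟩
    · rw [h]
    · rw [h, neg_div, ← J_neg]
  rw [hJ]
  field_simp

end ChernoffLaplaceAux

/-- for `μ₀ ≠ μ₁` and `β > 0`, the Chernoff information between the Laplace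
distributions with common scale `β` and locations `μ₀`, `μ₁` (densities w.r.t. Lebesgue
measure on ℝ) equals `u − log(1 + u)` with `u = |μ₁ − μ₀|/(2β)`, and the supremum over
`α ∈ (0,1)` is attained at `α = 1/2`. -/
theorem chernoff_laplace (μ₀ μ₁ β : ℝ) (hβ : 0 < β) (hne : μ₀ ≠ μ₁) :
    ((⨆ α : Set.Ioo (0 : ℝ) 1, - Real.log (∫ x : ℝ,
        (1 / (2 * β) * Real.exp (-|x - μ₀| / β)) ^ (α : ℝ)
          * (1 / (2 * β) * Real.exp (-|x - μ₁| / β)) ^ (1 - (α : ℝ))))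
      = |μ₁ - μ₀| / (2 * β) - Real.log (1 + |μ₁ - μ₀| / (2 * β)))
    ∧ (- Real.log (∫ x : ℝ,
        (1 / (2 * β) * Real.exp (-|x - μ₀| / β)) ^ ((1 : ℝ) / 2)
          * (1 / (2 * β) * Real.exp (-|x - μ₁| / β)) ^ (1 - (1 : ℝ) / 2))
      = |μ₁ - μ₀| / (2 * β) - Real.log (1 + |μ₁ - μ₀| / (2 * β))) := by
  classical
  set c : ℝ := |μ₁ - μ₀| / β with hc_def
  have hc : 0 < c := by
    have : 0 < |μ₁ - μ₀| := abs_pos.mpr (sub_ne_zero.mpr (Ne.symm hne))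
    positivity
  have hu : |μ₁ - μ₀| / (2 * β) = c / 2 := by
    rw [hc_def]; ring
  set W : ℝ := (1 + c / 2) * Real.exp (-(c / 2)) with hW_def
  have hWpos : 0 < W := by positivity
  have hlogW : - Real.log W = c / 2 - Real.log (1 + c / 2) := by
    rw [hW_def, Real.log_mul (by positivity) (Real.exp_ne_zero _), Real.log_exp]
    ring
  -- the value of the integral for any a in (0,1)
  have hval : ∀ a : ℝ, 0 < a → a < 1 →
      (∫ x : ℝ, (1 / (2 * β) * Real.exp (-|x - μ₀| / β)) ^ a
        * (1 / (2 * β) * Real.exp (-|x - μ₁| / β)) ^ (1 - a))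
      = (1/2) * ∫ y : ℝ, ChernoffLaplaceAux.g a c y := fun a ha0 ha1 =>
    ChernoffLaplaceAux.master hβ hne ha0 ha1
  -- the bound
  have hbound : ∀ a : ℝ, 0 < a → a < 1 →
      - Real.log (∫ x : ℝ, (1 / (2 * β) * Real.exp (-|x - μ₀| / β)) ^ a
        * (1 / (2 * β) * Real.exp (-|x - μ₁| / β)) ^ (1 - a))
      ≤ c / 2 - Real.log (1 + c / 2) := by
    intro a ha0 ha1
    rw [hval a ha0 ha1, ← hlogW]
    have hge : W ≤ (1/2) * ∫ y : ℝ, ChernoffLaplaceAux.g a c y := by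
      have := ChernoffLaplaceAux.J_ge ha0 ha1 hc
      rw [hW_def]
      nlinarith [this]
    have := Real.log_le_log hWpos hge
    linarith
  -- the value at 1/2
  have hhalf : - Real.log (∫ x : ℝ, (1 / (2 * β) * Real.exp (-|x - μ₀| / β)) ^ ((1:ℝ)/2)
        * (1 / (2 * β) * Real.exp (-|x - μ₁| / β)) ^ (1 - (1:ℝ)/2))
      = c / 2 - Real.log (1 + c / 2) := by
    rw [hval (1/2) (by norm_num) (by norm_num), ChernoffLaplaceAux.J_half hc, ← hlogW]
    congr 1
    rw [hW_def]
    ring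
  constructor
  · haveI : Nonempty (Set.Ioo (0:ℝ) 1) := ⟨⟨1/2, by norm_num, by norm_num⟩⟩
    rw [hu]
    apply le_antisymm
    · exact ciSup_le fun α => hbound α α.2.1 α.2.2
    · have hbdd : BddAbove (Set.range fun α : Set.Ioo (0:ℝ) 1 =>
          - Real.log (∫ x : ℝ, (1 / (2 * β) * Real.exp (-|x - μ₀| / β)) ^ (α : ℝ)
            * (1 / (2 * β) * Real.exp (-|x - μ₁| / β)) ^ (1 - (α : ℝ)))) := by
        refine ⟨c / 2 - Real.log (1 + c / 2), ?_⟩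
        rintro y ⟨α, rfl⟩
        exact hbound α α.2.1 α.2.2
      have := le_ciSup hbdd (⟨1/2, by norm_num, by norm_num⟩ : Set.Ioo (0:ℝ) 1)
      rw [hhalf] at this
      exact this
  · rw [hu]
    exact hhalf
end
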